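/- arXiv:0801.0278 — 7 statements merged into one kernel-verified Lean document; each statement's English description precedes it below -/
import Mathlib

section
/- For any real function f on the vertices, the L¹ norm of the directed gradient of f decomposes as the sum for the positive and negative parts: ∑_{u,v} (f(u)−f(v))⁺ φ(u,v) = ∑_{u,v} (f⁺(u)−f⁺(v))⁺ φ(u,v) + ∑_{u,v} (f⁻(u)−f⁻(v))⁺ φ(u,v), where f⁺ = max(f,0) and f⁻ = max(−f,0). -/
/-! Pointwise, `(a - b)⁺ = (a⁺ - b⁺)⁺ + ((-b)⁺ - (-a)⁺)⁺`, so the negative part enters with the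
edge `(u, v)` reversed. Reversing edges does not change the sum, because a stationary Markov flow
is balanced (outflow `∑ v, φ u v` equals inflow `∑ v, φ v u`), whence `∑ (g u - g v) φ(u, v) = 0`
and `(x)⁺ - (-x)⁺ = x` lets the two orientations of `(g u - g v)⁺` be exchanged. -/

open Finset

lemma max_sub_zero_eq_posPart_add_negPart {α : Type*} [AddCommGroup α] [LinearOrder α]
    [IsOrderedAddMonoid α] (a b : α) :
    max (a - b) 0 = max (max a 0 - max b 0) 0 + max (max (-b) 0 - max (-a) 0) 0 := by
  grind

section BalancedFlow

variable {V R : Type*} [Fintype V] [Ring R] {φ : V → V → R}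

theorem sum_sum_sub_mul_eq_zero_of_balanced (hφ : ∀ u, ∑ v, φ u v = ∑ v, φ v u) (g : V → R) :
    ∑ u, ∑ v, (g u - g v) * φ u v = 0 := by
  have hout : ∑ u, ∑ v, g u * φ u v = ∑ u, ∑ v, g u * φ v u := by
    simp only [← mul_sum, hφ]
  simp only [sub_mul, sum_sub_distrib, hout]
  rw [sum_comm (f := fun u v => g v * φ u v), sub_self]

theorem sum_sum_max_sub_mul_comm_of_balanced [LinearOrder R] [AddLeftMono R]
    (hφ : ∀ u, ∑ v, φ u v = ∑ v, φ v u) (g : V → R) :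
    ∑ u, ∑ v, max (g u - g v) 0 * φ u v = ∑ u, ∑ v, max (g v - g u) 0 * φ u v := by
  rw [← sub_eq_zero, ← sum_sub_distrib]
  convert sum_sum_sub_mul_eq_zero_of_balanced hφ g using 2 with u
  rw [← sum_sub_distrib]
  refine sum_congr rfl fun v _ => ?_
  rw [← sub_mul, ← neg_sub (g u), max_zero_sub_max_neg_zero_eq_self]

end BalancedFlow

theorem stationary_flow_balanced {V R : Type*} [Fintype V] [CommSemiring R]
    {K : V → V → R} {π : V → R} (hK1 : ∀ u, ∑ v, K u v = 1)
    (hstat : ∀ v, ∑ u, π u * K u v = π v) (u : V) :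
    ∑ v, K u v * π u = ∑ v, K v u * π v := by
  rw [← sum_mul, hK1, one_mul, ← hstat u]
  exact sum_congr rfl fun v _ => mul_comm _ _

theorem directed_grad_pos_neg_decomposition_general {V : Type*} [Fintype V]
    (K : V → V → ℝ) (π : V → ℝ)
    (hK1 : ∀ u, ∑ v, K u v = 1)
    (hstat : ∀ v, ∑ u, π u * K u v = π v)
    (f : V → ℝ) :
    ∑ u, ∑ v, max (f u - f v) 0 * (K u v * π u)
      = ∑ u, ∑ v, max (max (f u) 0 - max (f v) 0) 0 * (K u v * π u)
        + ∑ u, ∑ v, max (max (-f u) 0 - max (-f v) 0) 0 * (K u v * π u) := by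
  rw [sum_sum_max_sub_mul_comm_of_balanced (φ := fun u v => K u v * π u)
    (stationary_flow_balanced hK1 hstat) (fun u => max (-f u) 0), ← sum_add_distrib]
  simp only [← sum_add_distrib, ← add_mul, ← max_sub_zero_eq_posPart_add_negPart]

theorem directed_grad_pos_neg_decomposition {V : Type*} [Fintype V]
    (K : V → V → ℝ) (π : V → ℝ)
    (hK0 : ∀ u v, 0 ≤ K u v) (hK1 : ∀ u, ∑ v, K u v = 1)
    (hπ : ∀ u, 0 < π u) (hstat : ∀ v, ∑ u, π u * K u v = π v)
    (f : V → ℝ) :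
    ∑ u, ∑ v, max (f u - f v) 0 * (K u v * π u)
      = ∑ u, ∑ v, max (max (f u) 0 - max (f v) 0) 0 * (K u v * π u)
        + ∑ u, ∑ v, max (max (-f u) 0 - max (-f v) 0) 0 * (K u v * π u) :=
  directed_grad_pos_neg_decomposition_general K π hK1 hstat f
end

section
/- For any real function f on the vertices, the normalized L¹ gradient of f² is bounded by twice the normalized L² gradient of f: (∑_{u,v} |f(u)²−f(v)²| φ(u,v)) / (∑_u f(u)² π(u)) ≤ 2 (∑_{u,v} |f(u)−f(v)|² φ(u,v))^{1/2} / (∑_u f(u)² π(u))^{1/2}, provided f ≠ 0. -/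
open Finset

/-!
Factor `|f u ^ 2 - f v ^ 2| = |f u - f v| * |f u + f v|` and apply Cauchy–Schwarz with respect
to the edge measure `φ(u,v) = K(u,v) π(u)`. The `|f u + f v| ^ 2` factor is at most
`2 (f u ^ 2 + f v ^ 2)`, and since both marginals of `φ` are `π` (stationarity), its
`φ`-integral is at most `4 ∑ f u ^ 2 π u`.
-/

section EdgeMeasure

variable {V : Type*} [Fintype V] {φ : V → V → ℝ} {π : V → ℝ}

theorem sq_sum_sum_abs_sq_sub_sq_mul_le (hφ : ∀ u v, 0 ≤ φ u v) (f : V → ℝ) :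
    (∑ u, ∑ v, |f u ^ 2 - f v ^ 2| * φ u v) ^ 2
      ≤ (∑ u, ∑ v, |f u - f v| ^ 2 * φ u v) * ∑ u, ∑ v, (f u + f v) ^ 2 * φ u v := by
  simp only [← Fintype.sum_prod_type']
  refine sum_sq_le_sum_mul_sum_of_sq_le_mul _ (fun p _ => by have := hφ p.1 p.2; positivity)
    (fun p _ => by have := hφ p.1 p.2; positivity) fun p _ => le_of_eq ?_
  simp only [mul_pow, sq_abs]
  ring

theorem sum_sum_mul_eq_of_sum_eq (hrow : ∀ u, ∑ v, φ u v = π u) (g : V → ℝ) :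
    ∑ u, ∑ v, g u * φ u v = ∑ u, g u * π u := by
  simp only [← mul_sum, hrow]

theorem sum_sum_sq_add_mul_le (hφ : ∀ u v, 0 ≤ φ u v) (hrow : ∀ u, ∑ v, φ u v = π u)
    (hcol : ∀ v, ∑ u, φ u v = π v) (f : V → ℝ) :
    ∑ u, ∑ v, (f u + f v) ^ 2 * φ u v ≤ 4 * ∑ u, f u ^ 2 * π u := by
  have hrow' := sum_sum_mul_eq_of_sum_eq hrow fun u => f u ^ 2
  have hcol' : ∑ u, ∑ v, f v ^ 2 * φ u v = ∑ u, f u ^ 2 * π u := by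
    rw [sum_comm]
    exact sum_sum_mul_eq_of_sum_eq (φ := fun v u => φ u v) hcol _
  calc ∑ u, ∑ v, (f u + f v) ^ 2 * φ u v
      ≤ ∑ u, ∑ v, 2 * (f u ^ 2 + f v ^ 2) * φ u v := by
        gcongr with u _ v _
        · exact hφ u v
        · exact add_sq_le
    _ = 2 * ∑ u, ∑ v, f u ^ 2 * φ u v + 2 * ∑ u, ∑ v, f v ^ 2 * φ u v := by
        simp only [mul_sum, ← sum_add_distrib]
        exact sum_congr rfl fun u _ => sum_congr rfl fun v _ => by ring
    _ = 4 * ∑ u, f u ^ 2 * π u := by rw [hrow', hcol']; ring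

theorem sq_sum_sum_abs_sq_sub_sq_mul_le_four_mul (hφ : ∀ u v, 0 ≤ φ u v)
    (hrow : ∀ u, ∑ v, φ u v = π u) (hcol : ∀ v, ∑ u, φ u v = π v) (f : V → ℝ) :
    (∑ u, ∑ v, |f u ^ 2 - f v ^ 2| * φ u v) ^ 2
      ≤ 4 * (∑ u, ∑ v, |f u - f v| ^ 2 * φ u v) * ∑ u, f u ^ 2 * π u := by
  calc _ ≤ (∑ u, ∑ v, |f u - f v| ^ 2 * φ u v) * ∑ u, ∑ v, (f u + f v) ^ 2 * φ u v :=
        sq_sum_sum_abs_sq_sub_sq_mul_le hφ f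
    _ ≤ (∑ u, ∑ v, |f u - f v| ^ 2 * φ u v) * (4 * ∑ u, f u ^ 2 * π u) := by
        gcongr
        · exact sum_nonneg fun u _ => sum_nonneg fun v _ => mul_nonneg (sq_nonneg _) (hφ u v)
        · exact sum_sum_sq_add_mul_le hφ hrow hcol f
    _ = _ := by ring

end EdgeMeasure

theorem div_le_two_mul_sqrt_div_sqrt {a b d : ℝ} (hd : 0 ≤ d) (h : a ^ 2 ≤ 4 * b * d) :
    a / d ≤ 2 * √b / √d := by
  rcases hd.eq_or_lt with rfl | hd
  · simp -- both sides are `0` since `x / 0 = 0`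
  have key : a ≤ 2 * √b * √d := calc
    a ≤ √(a ^ 2) := (le_abs_self a).trans_eq (Real.sqrt_sq_eq_abs a).symm
    _ ≤ √(4 * b * d) := Real.sqrt_le_sqrt h
    _ = 2 * √b * √d := by
      rw [Real.sqrt_mul' _ hd.le, Real.sqrt_mul zero_le_four, show (4 : ℝ) = 2 ^ 2 by norm_num,
        Real.sqrt_sq zero_le_two]
  rw [div_le_div_iff₀ hd (Real.sqrt_pos.2 hd)]
  calc a * √d ≤ 2 * √b * √d * √d := by gcongr
    _ = 2 * √b * d := by rw [mul_assoc, Real.mul_self_sqrt hd.le]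

theorem grad_sq_L1_le_two_grad_L2_general {V : Type*} [Fintype V]
    (K : V → V → ℝ) (π : V → ℝ)
    (hK0 : ∀ u v, 0 ≤ K u v) (hK1 : ∀ u, ∑ v, K u v = 1)
    (hπ : ∀ u, 0 < π u)
    (hstat : ∀ v, ∑ u, π u * K u v = π v)
    (f : V → ℝ) :
    (∑ u, ∑ v, |f u ^ 2 - f v ^ 2| * (K u v * π u)) / (∑ u, f u ^ 2 * π u)
      ≤ 2 * Real.sqrt (∑ u, ∑ v, |f u - f v| ^ 2 * (K u v * π u))
          / Real.sqrt (∑ u, f u ^ 2 * π u) := by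
  have hφ : ∀ u v, 0 ≤ K u v * π u := fun u v => mul_nonneg (hK0 u v) (hπ u).le
  have hrow : ∀ u, ∑ v, K u v * π u = π u := fun u => by rw [← sum_mul, hK1, one_mul]
  have hcol : ∀ v, ∑ u, K u v * π u = π v := fun v => by
    rw [← hstat v]; exact sum_congr rfl fun u _ => mul_comm _ _
  exact div_le_two_mul_sqrt_div_sqrt
    (sum_nonneg fun u _ => mul_nonneg (sq_nonneg _) (hπ u).le)
    (sq_sum_sum_abs_sq_sub_sq_mul_le_four_mul hφ hrow hcol f)

theorem grad_sq_L1_le_two_grad_L2 {V : Type*} [Fintype V]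
    (K : V → V → ℝ) (π : V → ℝ)
    (hK0 : ∀ u v, 0 ≤ K u v) (hK1 : ∀ u, ∑ v, K u v = 1)
    (hπ : ∀ u, 0 < π u) (hπ1 : ∑ u, π u = 1)
    (hstat : ∀ v, ∑ u, π u * K u v = π v)
    (f : V → ℝ) (hf : f ≠ 0) :
    (∑ u, ∑ v, |f u ^ 2 - f v ^ 2| * (K u v * π u)) / (∑ u, f u ^ 2 * π u)
      ≤ 2 * Real.sqrt (∑ u, ∑ v, |f u - f v| ^ 2 * (K u v * π u))
          / Real.sqrt (∑ u, f u ^ 2 * π u) :=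
  grad_sq_L1_le_two_grad_L2_general K π hK0 hK1 hπ hstat f
end

section
/- Let {Q_i}_{i=1}^n be n pairwise disjoint nonempty subsets of V, let Q* be the complement of their union, and for j ∈ {1,…,n} set S_j := (1/n)( ∂(Q_j ∪ Q*)/π(Q_j ∪ Q*) + ∑_{i≠j} ∂(Q_i)/π(Q_i) ), where ∂(Q) = ∑_{u∈Q,v∉Q} φ(u,v). Then min_j S_j ≤ (1/(n(1+(n−1)π(Q*)))) · ( (n−2)∂(Q*) + (1+(n−2)π(Q*)) ∑_{i=1}^n ∂(Q_i)/π(Q_i) ). -/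
open Finset

/-- Outgoing boundary flow `∂(Q) = ∑_{u∈Q, v∉Q} K(u,v)π(u)`. -/
noncomputable def dpart {V : Type*} [Fintype V] [DecidableEq V]
    (K : V → V → ℝ) (π : V → ℝ) (Q : Finset V) : ℝ :=
  ∑ u ∈ Q, ∑ v ∈ Qᶜ, K u v * π u

/-- `π(Q) = ∑_{u∈Q} π(u)`. -/
noncomputable def pim {V : Type*} (π : V → ℝ) (Q : Finset V) : ℝ :=
  ∑ u ∈ Q, π u

/-!
Weight `S_j` by `w_j = π(Q_j ∪ Q*)`: the minimum of the `S_j` is at most their `w`-weighted mean,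
and `∑ w_j = 1 + (n-1)π(Q*)`. In `w_j S_j` the quotient `∂(Q_j ∪ Q*)/π(Q_j ∪ Q*)` becomes
`∂(Q_j ∪ Q*)`, and `∑_j ∂(Q_j ∪ Q*) = ∑_j ∂(Q_j) + (n-2)∂(Q*)`: gluing `Q*` to `Q_j` loses the
flows between them, and over all `j` these add up to `∂(Q*ᶜ) + ∂(Q*) = 2∂(Q*)` since `φ` is a flow.
-/

lemma pim_union {V : Type*} [DecidableEq V] (π : V → ℝ) {A B : Finset V}
    (h : Disjoint A B) : pim π (A ∪ B) = pim π A + pim π B :=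
  sum_union h

lemma pim_biUnion {V ι : Type*} [DecidableEq V] (π : V → ℝ) {s : Finset ι}
    {Q : ι → Finset V} (h : (s : Set ι).PairwiseDisjoint Q) :
    pim π (s.biUnion Q) = ∑ i ∈ s, pim π (Q i) :=
  sum_biUnion h

lemma pim_compl {V : Type*} [Fintype V] [DecidableEq V] {π : V → ℝ}
    (hπ1 : ∑ u, π u = 1) (Q : Finset V) : pim π Qᶜ = 1 - pim π Q := by
  rw [← hπ1, ← sum_compl_add_sum Q π, pim, pim, add_sub_cancel_right]

lemma pim_pos {V : Type*} {π : V → ℝ} (hπ : ∀ u, 0 < π u) {Q : Finset V}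
    (hQ : Q.Nonempty) : 0 < pim π Q :=
  sum_pos (fun u _ => hπ u) hQ

section Flow

variable {V : Type*} (K : V → V → ℝ) (π : V → ℝ)

noncomputable def flow (A B : Finset V) : ℝ :=
  ∑ u ∈ A, ∑ v ∈ B, K u v * π u

lemma dpart_eq_flow [Fintype V] [DecidableEq V] (Q : Finset V) :
    dpart K π Q = flow K π Q Qᶜ := rfl

lemma flow_union_left [DecidableEq V] {A B : Finset V} (C : Finset V) (h : Disjoint A B) :
    flow K π (A ∪ B) C = flow K π A C + flow K π B C :=
  sum_union h

lemma flow_union_right [DecidableEq V] (A : Finset V) {B C : Finset V} (h : Disjoint B C) :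
    flow K π A (B ∪ C) = flow K π A B + flow K π A C := by
  rw [flow, flow, flow, ← sum_add_distrib]
  exact sum_congr rfl fun u _ => sum_union h

lemma flow_biUnion_left [DecidableEq V] {ι : Type*} {s : Finset ι} {Q : ι → Finset V}
    (h : (s : Set ι).PairwiseDisjoint Q) (C : Finset V) :
    flow K π (s.biUnion Q) C = ∑ i ∈ s, flow K π (Q i) C :=
  sum_biUnion h

lemma flow_biUnion_right [DecidableEq V] {ι : Type*} {s : Finset ι} {Q : ι → Finset V}
    (h : (s : Set ι).PairwiseDisjoint Q) (A : Finset V) :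
    flow K π A (s.biUnion Q) = ∑ i ∈ s, flow K π A (Q i) := by
  simp_rw [flow, sum_biUnion h]
  exact sum_comm

variable {K π}

lemma flow_univ_right [Fintype V] (hK1 : ∀ u, ∑ v, K u v = 1) (A : Finset V) :
    flow K π A univ = pim π A :=
  sum_congr rfl fun u _ => by rw [← sum_mul, hK1, one_mul]

lemma flow_univ_left [Fintype V] (hstat : ∀ v, ∑ u, π u * K u v = π v) (B : Finset V) :
    flow K π univ B = pim π B := by
  rw [flow, sum_comm]
  exact sum_congr rfl fun v _ => by simp_rw [mul_comm (K _ v), hstat]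

lemma flow_add_flow_compl_right [Fintype V] [DecidableEq V] (A B : Finset V) :
    flow K π A B + flow K π A Bᶜ = flow K π A univ := by
  rw [← flow_union_right K π A disjoint_compl_right, union_compl]

lemma flow_add_flow_compl_left [Fintype V] [DecidableEq V] (A B : Finset V) :
    flow K π A B + flow K π Aᶜ B = flow K π univ B := by
  rw [← flow_union_left K π B disjoint_compl_right, union_compl]

lemma dpart_eq_pim_sub_flow [Fintype V] [DecidableEq V] (hK1 : ∀ u, ∑ v, K u v = 1)
    (Q : Finset V) : dpart K π Q = pim π Q - flow K π Q Q := by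
  rw [dpart_eq_flow, ← flow_univ_right hK1, ← flow_add_flow_compl_right, add_sub_cancel_left]

lemma dpart_compl [Fintype V] [DecidableEq V] (hK1 : ∀ u, ∑ v, K u v = 1)
    (hstat : ∀ v, ∑ u, π u * K u v = π v) (Q : Finset V) : dpart K π Qᶜ = dpart K π Q := by
  rw [dpart_eq_flow, compl_compl, dpart_eq_pim_sub_flow hK1, ← flow_univ_left hstat,
    ← flow_add_flow_compl_left, add_sub_cancel_left]

lemma dpart_union [Fintype V] [DecidableEq V] (hK1 : ∀ u, ∑ v, K u v = 1) {A B : Finset V}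
    (h : Disjoint A B) :
    dpart K π (A ∪ B) = dpart K π A + dpart K π B - flow K π A B - flow K π B A := by
  simp only [dpart_eq_pim_sub_flow hK1, pim_union π h, flow_union_left K π _ h,
    flow_union_right K π _ h]
  ring

end Flow

lemma exists_le_of_sum_mul_le {ι : Type*} {s : Finset ι} (hs : s.Nonempty) {w f : ι → ℝ}
    (hw : ∀ i ∈ s, 0 < w i) {c : ℝ} (h : ∑ i ∈ s, w i * f i ≤ (∑ i ∈ s, w i) * c) :
    ∃ i ∈ s, f i ≤ c := by
  rw [sum_mul] at h
  obtain ⟨i, hi, hle⟩ := exists_le_of_sum_le hs h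
  exact ⟨i, hi, le_of_mul_le_mul_left hle (hw i hi)⟩

section Partition

variable {V ι : Type*} [Fintype V] [DecidableEq V] [Fintype ι] {K : V → V → ℝ} {π : V → ℝ}
  {Q : ι → Finset V}

lemma disjoint_compl_biUnion (Q : ι → Finset V) (j : ι) : Disjoint (Q j) (univ.biUnion Q)ᶜ :=
  disjoint_compl_right.mono_left (subset_biUnion_of_mem Q (mem_univ j))

lemma sum_dpart_union_compl_biUnion (hK1 : ∀ u, ∑ v, K u v = 1)
    (hstat : ∀ v, ∑ u, π u * K u v = π v) (hQ : Pairwise (Function.onFun Disjoint Q)) :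
    ∑ j, dpart K π (Q j ∪ (univ.biUnion Q)ᶜ) =
      ∑ j, dpart K π (Q j) + ((Fintype.card ι : ℝ) - 2) * dpart K π (univ.biUnion Q)ᶜ := by
  set R := (univ.biUnion Q)ᶜ
  have hPD : ((univ : Finset ι) : Set ι).PairwiseDisjoint Q := fun i _ j _ hij => hQ hij
  have hinto : ∑ j, flow K π (Q j) R = dpart K π R := by
    rw [← flow_biUnion_left K π hPD, ← dpart_compl hK1 hstat, dpart_eq_flow, compl_compl]
  have hout : ∑ j, flow K π R (Q j) = dpart K π R := by
    rw [← flow_biUnion_right K π hPD, dpart_eq_flow, compl_compl]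
  have hQR : ∀ j, Disjoint (Q j) R := disjoint_compl_biUnion Q
  simp only [dpart_union hK1 (hQR _), sum_sub_distrib, sum_add_distrib, hinto, hout, sum_const,
    card_univ, nsmul_eq_mul]
  ring

lemma sum_pim_union_compl_biUnion (hπ1 : ∑ u, π u = 1)
    (hQ : Pairwise (Function.onFun Disjoint Q)) :
    ∑ j, pim π (Q j ∪ (univ.biUnion Q)ᶜ) =
      1 + ((Fintype.card ι : ℝ) - 1) * pim π (univ.biUnion Q)ᶜ := by
  have hPD : ((univ : Finset ι) : Set ι).PairwiseDisjoint Q := fun i _ j _ hij => hQ hij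
  simp only [pim_union π (disjoint_compl_biUnion Q _), sum_add_distrib, ← pim_biUnion π hPD,
    pim_compl hπ1, sum_const, card_univ, nsmul_eq_mul]
  ring

lemma sum_pim_union_compl_biUnion_mul_eq [DecidableEq ι] (hK1 : ∀ u, ∑ v, K u v = 1)
    (hπ : ∀ u, 0 < π u) (hπ1 : ∑ u, π u = 1) (hstat : ∀ v, ∑ u, π u * K u v = π v)
    (hQne : ∀ i, (Q i).Nonempty) (hQ : Pairwise (Function.onFun Disjoint Q)) {S : ι → ℝ}
    (hS : ∀ j, S j = (1 / (Fintype.card ι : ℝ)) *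
      (dpart K π (Q j ∪ (univ.biUnion Q)ᶜ) / pim π (Q j ∪ (univ.biUnion Q)ᶜ)
        + ∑ i ∈ univ.erase j, dpart K π (Q i) / pim π (Q i))) :
    ∑ j, pim π (Q j ∪ (univ.biUnion Q)ᶜ) * S j = (1 / (Fintype.card ι : ℝ)) *
      (((Fintype.card ι : ℝ) - 2) * dpart K π (univ.biUnion Q)ᶜ
        + (1 + ((Fintype.card ι : ℝ) - 2) * pim π (univ.biUnion Q)ᶜ)
          * ∑ i, dpart K π (Q i) / pim π (Q i)) := by
  set R := (univ.biUnion Q)ᶜ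
  set B := ∑ i, dpart K π (Q i) / pim π (Q i)
  have hwS : ∀ j, pim π (Q j ∪ R) * S j = (1 / (Fintype.card ι : ℝ)) * (dpart K π (Q j ∪ R)
      + pim π (Q j ∪ R) * B - dpart K π (Q j) - pim π R * (dpart K π (Q j) / pim π (Q j))) := by
    intro j
    have hD : pim π (Q j ∪ R) * (dpart K π (Q j ∪ R) / pim π (Q j ∪ R)) = dpart K π (Q j ∪ R) :=
      mul_div_cancel₀ _ (pim_pos hπ ((hQne j).mono subset_union_left)).ne'
    have hb : pim π (Q j ∪ R) * (dpart K π (Q j) / pim π (Q j))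
        = dpart K π (Q j) + pim π R * (dpart K π (Q j) / pim π (Q j)) := by
      rw [pim_union π (disjoint_compl_biUnion Q j), add_mul,
        mul_div_cancel₀ _ (pim_pos hπ (hQne j)).ne']
    rw [hS j, sum_erase_eq_sub (mem_univ j)]
    linear_combination (1 / (Fintype.card ι : ℝ)) * (hD - hb)
  have hW : ∑ j, pim π (Q j ∪ R) = 1 + ((Fintype.card ι : ℝ) - 1) * pim π R :=
    sum_pim_union_compl_biUnion hπ1 hQ
  have hX : ∑ j, dpart K π (Q j ∪ R) =
      ∑ j, dpart K π (Q j) + ((Fintype.card ι : ℝ) - 2) * dpart K π R :=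
    sum_dpart_union_compl_biUnion hK1 hstat hQ
  simp only [hwS, ← mul_sum, sum_sub_distrib, sum_add_distrib, ← sum_mul, hW, hX]
  ring

end Partition

theorem min_Sj_bound_general {V : Type*} [Fintype V] [DecidableEq V]
    (K : V → V → ℝ) (π : V → ℝ)
    (hK1 : ∀ u, ∑ v, K u v = 1)
    (hπ : ∀ u, 0 < π u) (hπ1 : ∑ u, π u = 1)
    (hstat : ∀ v, ∑ u, π u * K u v = π v)
    (n : ℕ) (hn : 0 < n) (Q : Fin n → Finset V)
    (hQne : ∀ i, (Q i).Nonempty)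
    (hQdisj : Pairwise (Function.onFun Disjoint Q))
    (Qs : Finset V) (hQs : Qs = (Finset.univ.biUnion Q)ᶜ)
    (S : Fin n → ℝ)
    (hS : ∀ j, S j = (1 / (n : ℝ)) *
      (dpart K π (Q j ∪ Qs) / pim π (Q j ∪ Qs)
        + ∑ i ∈ Finset.univ.erase j, dpart K π (Q i) / pim π (Q i))) :
    ∃ j, S j ≤ (1 / ((n : ℝ) * (1 + ((n : ℝ) - 1) * pim π Qs))) *
      (((n : ℝ) - 2) * dpart K π Qs
        + (1 + ((n : ℝ) - 2) * pim π Qs) * ∑ i, dpart K π (Q i) / pim π (Q i)) := by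
  subst hQs
  have hne : (univ : Finset (Fin n)).Nonempty := ⟨⟨0, hn⟩, mem_univ _⟩
  have hw : ∀ j, 0 < pim π (Q j ∪ (univ.biUnion Q)ᶜ) := fun j =>
    pim_pos hπ ((hQne j).mono subset_union_left)
  have hW := sum_pim_union_compl_biUnion hπ1 hQdisj
  have hsum := sum_pim_union_compl_biUnion_mul_eq hK1 hπ hπ1 hstat hQne hQdisj
    (by simpa only [Fintype.card_fin] using hS)
  simp only [Fintype.card_fin] at hW hsum
  have hWpos : 0 < 1 + ((n : ℝ) - 1) * pim π (univ.biUnion Q)ᶜ :=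
    hW ▸ sum_pos (fun j _ => hw j) hne
  refine (exists_le_of_sum_mul_le hne (fun j _ => hw j) (le_of_eq ?_)).imp fun j ⟨_, hj⟩ => hj
  rw [hsum, hW, ← mul_assoc, mul_one_div, mul_comm (n : ℝ), div_mul_cancel_left₀ hWpos.ne',
    one_div]

theorem min_Sj_bound {V : Type*} [Fintype V] [DecidableEq V]
    (K : V → V → ℝ) (π : V → ℝ)
    (hK0 : ∀ u v, 0 ≤ K u v) (hK1 : ∀ u, ∑ v, K u v = 1)
    (hπ : ∀ u, 0 < π u) (hπ1 : ∑ u, π u = 1)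
    (hstat : ∀ v, ∑ u, π u * K u v = π v)
    (n : ℕ) (hn : 0 < n) (Q : Fin n → Finset V)
    (hQne : ∀ i, (Q i).Nonempty)
    (hQdisj : Pairwise (Function.onFun Disjoint Q))
    (Qs : Finset V) (hQs : Qs = (Finset.univ.biUnion Q)ᶜ)
    (S : Fin n → ℝ)
    (hS : ∀ j, S j = (1 / (n : ℝ)) *
      (dpart K π (Q j ∪ Qs) / pim π (Q j ∪ Qs)
        + ∑ i ∈ Finset.univ.erase j, dpart K π (Q i) / pim π (Q i))) :
    ∃ j, S j ≤ (1 / ((n : ℝ) * (1 + ((n : ℝ) - 1) * pim π Qs))) *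
      (((n : ℝ) - 2) * dpart K π Qs
        + (1 + ((n : ℝ) - 2) * pim π Qs) * ∑ i, dpart K π (Q i) / pim π (Q i)) :=
  min_Sj_bound_general K π hK1 hπ hπ1 hstat n hn Q hQne hQdisj Qs hQs S hS
end

section
/- Define ι_n := min over families of n pairwise disjoint nonempty subsets {Q_i} of V of (1/n)∑_i ∂(Q_i)/π(Q_i), and ι̃_n := the same minimum restricted to partitions of V into n nonempty parts. Then 0 ≤ ι̃_n − ι_n ≤ 1/n. -/
/-
Absorbing everything a disjoint family `Q₁, …, Qₙ` misses into `Q₁` makes it a partition and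
changes only the first ratio `∂(Q₁)/π(Q₁)`. Every such ratio lies in `[0, 1]`, because the flow
leaving a set is at most its mass, so the mean of the ratios grows by at most `1/n`.
-/

open Finset

/-- The `n`-th isoperimetric constant: minimum of the mean normalized boundary over
families of `n` pairwise disjoint nonempty subsets of `V`. -/
noncomputable def iotaD {V : Type*} [Fintype V] [DecidableEq V]
    (K : V → V → ℝ) (π : V → ℝ) (n : ℕ) : ℝ :=
  sInf {x : ℝ | ∃ Q : Fin n → Finset V, (∀ i, (Q i).Nonempty) ∧
    Pairwise (Function.onFun Disjoint Q) ∧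
    x = (∑ i, dpart K π (Q i) / pim π (Q i)) / n}

/-- The `n`-th partition isoperimetric constant: minimum of the mean normalized boundary
over partitions of `V` into `n` nonempty parts. -/
noncomputable def iotaP {V : Type*} [Fintype V] [DecidableEq V]
    (K : V → V → ℝ) (π : V → ℝ) (n : ℕ) : ℝ :=
  sInf {x : ℝ | ∃ Q : Fin n → Finset V, (∀ i, (Q i).Nonempty) ∧
    Pairwise (Function.onFun Disjoint Q) ∧
    Finset.univ.biUnion Q = Finset.univ ∧
    x = (∑ i, dpart K π (Q i) / pim π (Q i)) / n}

open Function

lemma pairwise_disjoint_update {ι α : Type*} [DecidableEq ι] [Lattice α] [OrderBot α]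
    {f : ι → α} (hf : Pairwise (Disjoint on f)) {i : ι} {a : α}
    (ha : ∀ j, j ≠ i → Disjoint a (f j)) : Pairwise (Disjoint on update f i a) := by
  intro j k hjk
  simp only [onFun, update_apply]
  split_ifs with hj hk hk
  · exact absurd (hj.trans hk.symm) hjk
  · exact ha k hk
  · exact (ha j hj).symm
  · exact hf hjk

lemma csInf_le_csInf_add {S T : Set ℝ} (hT : T.Nonempty) (hS : BddBelow S) {c : ℝ}
    (h : ∀ x ∈ T, ∃ y ∈ S, y ≤ x + c) : sInf S ≤ sInf T + c := by
  rw [← sub_le_iff_le_add]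
  refine le_csInf hT fun x hx => ?_
  obtain ⟨y, hy, hyx⟩ := h x hx
  linarith [csInf_le hS hy]

lemma exists_pairwise_disjoint_nonempty {α : Type*} [Fintype α] {n : ℕ}
    (hn : n ≤ Fintype.card α) :
    ∃ Q : Fin n → Finset α, (∀ i, (Q i).Nonempty) ∧ Pairwise (Disjoint on Q) := by
  classical
  obtain ⟨e⟩ : Nonempty (Fin n ↪ α) := Embedding.nonempty_of_card_le (by simpa using hn)
  exact ⟨fun i => {e i}, fun i => singleton_nonempty _,
    fun i j hij => disjoint_singleton.2 (e.injective.ne hij)⟩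

section Absorb

variable {ι α : Type*} [Fintype ι] [DecidableEq ι] [Fintype α] [DecidableEq α]

def absorbUncovered (Q : ι → Finset α) (i : ι) : ι → Finset α :=
  update Q i (Q i ∪ (univ.biUnion Q)ᶜ)

lemma subset_absorbUncovered (Q : ι → Finset α) (i j : ι) : Q j ⊆ absorbUncovered Q i j := by
  rcases eq_or_ne j i with rfl | hj
  · simp [absorbUncovered]
  · simp [absorbUncovered, hj]

lemma biUnion_absorbUncovered (Q : ι → Finset α) (i : ι) :
    univ.biUnion (absorbUncovered Q i) = univ := by
  refine eq_univ_of_forall fun a => mem_biUnion.2 ?_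
  by_cases ha : a ∈ univ.biUnion Q
  · obtain ⟨j, -, haj⟩ := mem_biUnion.1 ha
    exact ⟨j, mem_univ _, subset_absorbUncovered Q i j haj⟩
  · exact ⟨i, mem_univ _, by simp [absorbUncovered, ha]⟩

lemma pairwise_disjoint_absorbUncovered {Q : ι → Finset α} (hQ : Pairwise (Disjoint on Q))
    (i : ι) : Pairwise (Disjoint on absorbUncovered Q i) :=
  pairwise_disjoint_update hQ fun j hj => disjoint_union_left.2
    ⟨hQ hj.symm, disjoint_compl_left.mono_right (subset_biUnion_of_mem Q (mem_univ j))⟩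

lemma sum_comp_absorbUncovered_le (r : Finset α → ℝ) (hr0 : ∀ s, 0 ≤ r s) (hr1 : ∀ s, r s ≤ 1)
    (Q : ι → Finset α) (i : ι) :
    ∑ j, r (absorbUncovered Q i j) ≤ ∑ j, r (Q j) + 1 := by
  have hupdate := sum_update_of_mem (mem_univ i) (r ∘ Q) (r (Q i ∪ (univ.biUnion Q)ᶜ))
  have hsplit := sum_eq_add_sum_sdiff_singleton_of_mem (mem_univ i) (r ∘ Q)
  simp only [absorbUncovered, ← comp_update, comp_apply] at hupdate hsplit ⊢
  linarith [hr0 (Q i), hr1 (Q i ∪ (univ.biUnion Q)ᶜ)]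

end Absorb

lemma pim_nonneg {V : Type*} {π : V → ℝ} (hπ : ∀ u, 0 ≤ π u) (Q : Finset V) : 0 ≤ pim π Q :=
  sum_nonneg fun u _ => hπ u

section Flow

variable {V : Type*} [Fintype V] [DecidableEq V] {K : V → V → ℝ} {π : V → ℝ}

lemma dpart_nonneg (hK0 : ∀ u v, 0 ≤ K u v) (hπ : ∀ u, 0 ≤ π u) (Q : Finset V) :
    0 ≤ dpart K π Q :=
  sum_nonneg fun u _ => sum_nonneg fun v _ => mul_nonneg (hK0 u v) (hπ u)

lemma dpart_le_pim (hK0 : ∀ u v, 0 ≤ K u v) (hK1 : ∀ u, ∑ v, K u v ≤ 1)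
    (hπ : ∀ u, 0 ≤ π u) (Q : Finset V) : dpart K π Q ≤ pim π Q :=
  sum_le_sum fun u _ => by
    rw [← sum_mul]
    exact mul_le_of_le_one_left (hπ u)
      ((sum_le_sum_of_subset_of_nonneg (subset_univ _) fun v _ _ => hK0 u v).trans (hK1 u))

lemma dpart_div_pim_nonneg (hK0 : ∀ u v, 0 ≤ K u v) (hπ : ∀ u, 0 ≤ π u) (Q : Finset V) :
    0 ≤ dpart K π Q / pim π Q :=
  div_nonneg (dpart_nonneg hK0 hπ Q) (pim_nonneg hπ Q)

lemma dpart_div_pim_le_one (hK0 : ∀ u v, 0 ≤ K u v) (hK1 : ∀ u, ∑ v, K u v ≤ 1)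
    (hπ : ∀ u, 0 ≤ π u) (Q : Finset V) : dpart K π Q / pim π Q ≤ 1 :=
  div_le_one_of_le₀ (dpart_le_pim hK0 hK1 hπ Q) (pim_nonneg hπ Q)

lemma mean_dpart_div_pim_nonneg (hK0 : ∀ u v, 0 ≤ K u v) (hπ : ∀ u, 0 ≤ π u) {n : ℕ}
    (Q : Fin n → Finset V) : 0 ≤ (∑ i, dpart K π (Q i) / pim π (Q i)) / n :=
  div_nonneg (sum_nonneg fun i _ => dpart_div_pim_nonneg hK0 hπ (Q i)) n.cast_nonneg

lemma exists_partition_mean_le (hK0 : ∀ u v, 0 ≤ K u v) (hK1 : ∀ u, ∑ v, K u v ≤ 1)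
    (hπ : ∀ u, 0 ≤ π u) {n : ℕ} (hn : 0 < n) {Q : Fin n → Finset V}
    (hne : ∀ i, (Q i).Nonempty) (hQ : Pairwise (Disjoint on Q)) :
    ∃ P : Fin n → Finset V, (∀ i, (P i).Nonempty) ∧ Pairwise (Disjoint on P) ∧
      univ.biUnion P = univ ∧
      (∑ i, dpart K π (P i) / pim π (P i)) / n
        ≤ (∑ i, dpart K π (Q i) / pim π (Q i)) / n + 1 / n := by
  let i₀ : Fin n := ⟨0, hn⟩
  refine ⟨absorbUncovered Q i₀, fun i => (hne i).mono (subset_absorbUncovered Q i₀ i),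
    pairwise_disjoint_absorbUncovered hQ i₀, biUnion_absorbUncovered Q i₀, ?_⟩
  rw [← add_div]
  exact div_le_div_of_nonneg_right (sum_comp_absorbUncovered_le _
    (dpart_div_pim_nonneg hK0 hπ) (dpart_div_pim_le_one hK0 hK1 hπ) Q i₀) n.cast_nonneg

end Flow

theorem iotaP_sub_iotaD_bounds_general {V : Type*} [Fintype V] [DecidableEq V]
    (K : V → V → ℝ) (π : V → ℝ)
    (hK0 : ∀ u v, 0 ≤ K u v) (hK1 : ∀ u, ∑ v, K u v = 1)
    (hπ : ∀ u, 0 < π u)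
    (n : ℕ) (hn : 0 < n) (hcard : n ≤ Fintype.card V) :
    0 ≤ iotaP K π n - iotaD K π n ∧ iotaP K π n - iotaD K π n ≤ 1 / n := by
  have hπ₀ : ∀ u, 0 ≤ π u := fun u => (hπ u).le
  have hK1' : ∀ u, ∑ v, K u v ≤ 1 := fun u => (hK1 u).le
  obtain ⟨Q₀, hQ₀, hdisj₀⟩ := exists_pairwise_disjoint_nonempty hcard
  unfold iotaP iotaD
  refine ⟨sub_nonneg.2 (csInf_le_csInf ?_ ?_ ?_),
    sub_le_iff_le_add'.2 (csInf_le_csInf_add ?_ ?_ ?_)⟩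
  · exact ⟨0, by rintro _ ⟨Q, -, -, rfl⟩; exact mean_dpart_div_pim_nonneg hK0 hπ₀ Q⟩
  · obtain ⟨P, hP, hdisj, hcov, -⟩ := exists_partition_mean_le hK0 hK1' hπ₀ hn hQ₀ hdisj₀
    exact ⟨_, P, hP, hdisj, hcov, rfl⟩
  · rintro _ ⟨Q, hQ, hdisj, -, rfl⟩
    exact ⟨Q, hQ, hdisj, rfl⟩
  · exact ⟨_, Q₀, hQ₀, hdisj₀, rfl⟩
  · exact ⟨0, by rintro _ ⟨Q, -, -, -, rfl⟩; exact mean_dpart_div_pim_nonneg hK0 hπ₀ Q⟩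
  · rintro _ ⟨Q, hQ, hdisj, rfl⟩
    obtain ⟨P, hP, hPdisj, hcov, hle⟩ := exists_partition_mean_le hK0 hK1' hπ₀ hn hQ hdisj
    exact ⟨_, ⟨P, hP, hPdisj, hcov, rfl⟩, hle⟩

theorem iotaP_sub_iotaD_bounds {V : Type*} [Fintype V] [DecidableEq V]
    (K : V → V → ℝ) (π : V → ℝ)
    (hK0 : ∀ u v, 0 ≤ K u v) (hK1 : ∀ u, ∑ v, K u v = 1)
    (hπ : ∀ u, 0 < π u) (hπ1 : ∑ u, π u = 1)
    (hstat : ∀ v, ∑ u, π u * K u v = π v)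
    (n : ℕ) (hn : 0 < n) (hcard : n ≤ Fintype.card V) :
    0 ≤ iotaP K π n - iotaD K π n ∧ iotaP K π n - iotaD K π n ≤ 1 / n :=
  iotaP_sub_iotaD_bounds_general K π hK0 hK1 hπ n hn hcard
end

section
/- Ky Fan's minimum principle: for a self-adjoint operator A on a finite-dimensional real inner product space with eigenvalues λ_1 ≤ λ_2 ≤ … ≤ λ_ν, for any 1 ≤ n ≤ ν, the mean (1/n)∑_{k=1}^n λ_k equals (1/n) times the minimum of ∑_{i=1}^n ⟨A f_i, f_i⟩ over all orthonormal systems f_1, …, f_n. -/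
/-!
Expand each `f i` of an orthonormal system in the eigenbasis `F`: then
`∑ i, ⟪A (f i), f i⟫ = ∑ k, λ_k t_k` with `t_k = ∑ i, ⟪F k, f i⟫²`. By Bessel's inequality
`0 ≤ t_k ≤ 1`, and by Parseval `∑ k, t_k = n`. Among such weights `∑ k, λ_k t_k` is smallest
when all the weight sits on the `n` smallest eigenvalues, and the system `F 0, …, F (n - 1)`
attains this value.
-/

open Finset RealInnerProductSpace

theorem Finset.sum_le_sum_mul_of_threshold {ι : Type*} [Fintype ι] [DecidableEq ι]
    (s : Finset ι) {lam t : ι → ℝ} (μ : ℝ) (hlo : ∀ k ∈ s, lam k ≤ μ)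
    (hhi : ∀ k ∉ s, μ ≤ lam k) (ht : ∀ k, t k ∈ Set.Icc (0 : ℝ) 1)
    (hsum : ∑ k, t k = #s) :
    ∑ k ∈ s, lam k ≤ ∑ k, lam k * t k := by
  -- `(lam k - μ) * (t k - 𝟙_s k) ≥ 0`; after summing, the `μ`-terms cancel because `∑ t = #s`.
  have hterm : ∀ k, μ * t k - (if k ∈ s then μ else 0)
      ≤ lam k * t k - (if k ∈ s then lam k else 0) := by
    intro k
    obtain ⟨ht0, ht1⟩ := ht k
    split_ifs with hk
    · nlinarith [hlo k hk]
    · nlinarith [hhi k hk]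
  have := sum_le_sum fun k (_ : k ∈ univ) => hterm k
  simp only [sum_sub_distrib, sum_ite_mem, univ_inter, ← mul_sum, hsum, sum_const,
    nsmul_eq_mul] at this
  linarith

section

variable {E ι : Type*} [NormedAddCommGroup E] [InnerProductSpace ℝ E] [Fintype ι]
  {A : E →ₗ[ℝ] E} {lam : ι → ℝ}

theorem LinearMap.IsSymmetric.inner_apply_self_eq_sum (hA : A.IsSymmetric)
    (b : OrthonormalBasis ι ℝ E) (heig : ∀ k, A (b k) = lam k • b k) (x : E) :
    ⟪A x, x⟫ = ∑ k, lam k * ⟪b k, x⟫ ^ 2 := by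
  rw [← b.sum_inner_mul_inner (A x) x]
  refine sum_congr rfl fun k _ => ?_
  rw [hA, heig, real_inner_smul_right, real_inner_comm]
  ring

theorem LinearMap.IsSymmetric.sum_le_sum_inner_apply_self [DecidableEq ι] {κ : Type*}
    [Fintype κ] (hA : A.IsSymmetric) (b : OrthonormalBasis ι ℝ E)
    (heig : ∀ k, A (b k) = lam k • b k) (s : Finset ι) (μ : ℝ) (hlo : ∀ k ∈ s, lam k ≤ μ)
    (hhi : ∀ k ∉ s, μ ≤ lam k) {f : κ → E} (hf : Orthonormal ℝ f)
    (hcard : #s = Fintype.card κ) :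
    ∑ k ∈ s, lam k ≤ ∑ i, ⟪A (f i), f i⟫ := by
  have hweight : ∀ k, ∑ i, ⟪f i, b k⟫ ^ 2 ∈ Set.Icc (0 : ℝ) 1 := fun k =>
    ⟨by positivity, by
      simpa [b.orthonormal.1 k] using hf.sum_inner_products_le (b k) (s := univ)⟩
  have hmass : ∑ k, ∑ i, ⟪f i, b k⟫ ^ 2 = #s := by
    rw [sum_comm]
    simp [b.sum_sq_inner_left, hf.1, hcard]
  calc ∑ k ∈ s, lam k ≤ ∑ k, lam k * ∑ i, ⟪f i, b k⟫ ^ 2 :=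
        sum_le_sum_mul_of_threshold s μ hlo hhi hweight hmass
    _ = ∑ i, ⟪A (f i), f i⟫ := by
        simp_rw [hA.inner_apply_self_eq_sum b heig, mul_sum, real_inner_comm (f _)]
        exact sum_comm

end

theorem ky_fan_minimum_principle {E : Type*} [NormedAddCommGroup E]
    [InnerProductSpace ℝ E] [FiniteDimensional ℝ E]
    (A : E →ₗ[ℝ] E) (hA : ∀ x y : E, ⟪A x, y⟫ = ⟪x, A y⟫)
    (lam : Fin (Module.finrank ℝ E) → ℝ) (hmono : Monotone lam)
    (F : Fin (Module.finrank ℝ E) → E) (hON : Orthonormal ℝ F)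
    (heig : ∀ k, A (F k) = lam k • F k)
    (n : ℕ) (hn : 0 < n) (hnν : n ≤ Module.finrank ℝ E) :
    (∑ i : Fin n, lam (Fin.castLE hnν i)) / n
      = (1 / n) * sInf {x : ℝ | ∃ f : Fin n → E,
          Orthonormal ℝ f ∧ x = ∑ i, ⟪A (f i), f i⟫} := by
  obtain ⟨b, hb⟩ := Orthonormal.exists_orthonormalBasis_extension_of_card_eq
    (by simp) (s := Set.univ) (hON.comp _ Subtype.val_injective)
  obtain rfl : ⇑b = F := funext fun k => hb k trivial
  set s := univ.map (Fin.castLEEmb hnν)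
  have hs : ∀ k, k ∈ s ↔ (k : ℕ) < n := fun k => by
    simp only [s, mem_map, mem_univ, true_and]
    exact ⟨by rintro ⟨i, rfl⟩; exact i.isLt, fun hk => ⟨⟨k, hk⟩, rfl⟩⟩
  have hleast : IsLeast {x : ℝ | ∃ f : Fin n → E,
      Orthonormal ℝ f ∧ x = ∑ i, ⟪A (f i), f i⟫} (∑ i : Fin n, lam (Fin.castLE hnν i)) := by
    refine ⟨⟨b ∘ Fin.castLE hnν, hON.comp _ (Fin.castLE_injective hnν), ?_⟩, ?_⟩
    · simp [heig, real_inner_smul_left, hON.1]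
    · rintro _ ⟨f, hf, rfl⟩
      refine (sum_map univ (Fin.castLEEmb hnν) lam).symm.trans_le <|
        LinearMap.IsSymmetric.sum_le_sum_inner_apply_self hA b heig s (lam ⟨n - 1, by omega⟩)
          ?_ ?_ hf (by simp [s])
      all_goals
        intro k hk
        rw [hs] at hk
        exact hmono (Fin.mk_le_mk.mpr (by omega))
  rw [hleast.csInf_eq, one_div, div_eq_inv_mul]
end

section
/- Duval–Reiner identity: let T be a self-adjoint linear operator on the finite inner product space of real functions on X with weight ω, let f be a function on X, let {Q_j}_{j=1}^k be a partition of X, set f_i := f·χ_{Q_i}, and let c_1, …, c_k be scalars, ζ ∈ ℝ, and g := ∑_i c_i f_i. Then ⟨T g, g⟩_ω − ζ‖g‖²_{2,ω} = ∑_{i=1}^k c_i² ⟨T f − ζ f, f_i⟩_ω − (1/2) ∑_{i,j=1}^k (c_i − c_j)² ⟨T f_j, f_i⟩_ω. -/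
/-! For a symmetric bilinear form `B`, expanding `(cᵢ - cⱼ)²` and using `B uⱼ uᵢ = B uᵢ uⱼ` gives
`B (∑ cᵢ uᵢ) (∑ cᵢ uᵢ) = ∑ cᵢ² B (∑ uⱼ) uᵢ - ½ ∑ (cᵢ - cⱼ)² B uⱼ uᵢ`.
Apply this to `B u v = ⟨T u - ζ u, v⟩_ω` and `uᵢ = fᵢ`: the `ζ`-part of the off-diagonal terms
vanishes because the `fᵢ` have disjoint supports, and on the diagonal `(cᵢ - cᵢ)² = 0`. -/

open Finset

section SymmetricSums

variable {R ι : Type*} [CommRing R] [Fintype ι]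

theorem sum_sum_sub_sq_mul_of_symm (a : ι → ι → R) (ha : ∀ i j, a i j = a j i) (c : ι → R) :
    ∑ i, ∑ j, (c i - c j) ^ 2 * a i j
      = 2 * ∑ i, c i ^ 2 * ∑ j, a i j - 2 * ∑ i, ∑ j, c i * c j * a i j := by
  have hswap : ∑ i, ∑ j, c j ^ 2 * a i j = ∑ i, ∑ j, c i ^ 2 * a i j := by
    rw [sum_comm]
    simp only [ha]
  have hexpand : ∀ i j, (c i - c j) ^ 2 * a i j
      = c i ^ 2 * a i j + c j ^ 2 * a i j - 2 * (c i * c j * a i j) := fun i j => by ring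
  simp only [hexpand, sum_add_distrib, sum_sub_distrib, ← mul_sum, hswap]
  ring

namespace LinearMap.BilinForm.IsSymm

variable {M : Type*} [AddCommGroup M] [Module R M] {B : LinearMap.BilinForm R M}

theorem two_mul_apply_sum_smul (hB : B.IsSymm) (c : ι → R) (u : ι → M) :
    2 * B (∑ i, c i • u i) (∑ i, c i • u i)
      = 2 * ∑ i, c i ^ 2 * B (∑ j, u j) (u i)
        - ∑ i, ∑ j, (c i - c j) ^ 2 * B (u j) (u i) := by
  rw [sum_sum_sub_sq_mul_of_symm (fun i j => B (u j) (u i)) (fun i j => hB.eq _ _)]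
  simp only [map_sum, map_smul, LinearMap.sum_apply, LinearMap.smul_apply, smul_eq_mul,
    mul_sum, mul_assoc]
  ring

end LinearMap.BilinForm.IsSymm

end SymmetricSums

section Partition

variable {X ι : Type*} [DecidableEq X] {Q : ι → Finset X}

theorem ite_mem_mul_ite_mem_of_ne {R : Type*} [MulZeroClass R]
    (hdisj : Pairwise (Function.onFun Disjoint Q)) (f : X → R) {i j : ι} (hij : i ≠ j) (x : X) :
    (if x ∈ Q i then f x else 0) * (if x ∈ Q j then f x else 0) = 0 := by
  by_cases hi : x ∈ Q i
  · simp [disjoint_left.mp (hdisj hij) hi]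
  · simp [hi]

theorem sum_ite_mem_of_partition [Fintype X] [Fintype ι] {M : Type*} [AddCommMonoid M]
    (hdisj : Pairwise (Function.onFun Disjoint Q))
    (hcover : univ.biUnion Q = univ) (f : X → M) (x : X) :
    ∑ i, (if x ∈ Q i then f x else 0) = f x := by
  obtain ⟨i₀, -, hi₀⟩ := mem_biUnion.mp (hcover.symm ▸ mem_univ x)
  rw [Fintype.sum_eq_single i₀ fun i hi => if_neg fun hx => disjoint_left.mp (hdisj hi) hx hi₀,
    if_pos hi₀]

end Partition

section WeightedForm

variable {X : Type*} [Fintype X]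

def weightedForm (ω : X → ℝ) : LinearMap.BilinForm ℝ (X → ℝ) :=
  LinearMap.mk₂ ℝ (fun u v => ∑ x, u x * v x * ω x)
    (fun _ _ _ => by simp only [Pi.add_apply, add_mul, sum_add_distrib])
    (fun _ _ _ => by simp only [Pi.smul_apply, smul_eq_mul, mul_sum, mul_assoc])
    (fun _ _ _ => by simp only [Pi.add_apply, mul_add, add_mul, sum_add_distrib])
    (fun _ _ _ => by
      simp only [Pi.smul_apply, smul_eq_mul, mul_sum]
      exact sum_congr rfl fun _ _ => by ring)

theorem weightedForm_apply (ω : X → ℝ) (u v : X → ℝ) :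
    weightedForm ω u v = ∑ x, u x * v x * ω x := rfl

theorem isSymm_weightedForm_compLeft_sub_smul {ω : X → ℝ} {T : (X → ℝ) →ₗ[ℝ] (X → ℝ)}
    (hT : ∀ f g : X → ℝ, ∑ x, T f x * g x * ω x = ∑ x, f x * T g x * ω x) (ζ : ℝ) :
    ((weightedForm ω).compLeft (T - ζ • LinearMap.id)).IsSymm := by
  refine ⟨fun u v => ?_⟩
  simp only [LinearMap.BilinForm.compLeft_apply, map_sub, map_smul, LinearMap.sub_apply,
    LinearMap.smul_apply, LinearMap.id_apply, weightedForm_apply, hT u v]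
  congr 1
  · exact sum_congr rfl fun _ _ => by ring
  · congr 1; exact sum_congr rfl fun _ _ => by ring

theorem weightedForm_compLeft_sub_smul_apply (ω : X → ℝ) (T : (X → ℝ) →ₗ[ℝ] (X → ℝ)) (ζ : ℝ)
    (u v : X → ℝ) :
    (weightedForm ω).compLeft (T - ζ • LinearMap.id) u v
      = ∑ x, T u x * v x * ω x - ζ * ∑ x, u x * v x * ω x := by
  simp only [LinearMap.BilinForm.compLeft_apply, LinearMap.sub_apply, LinearMap.smul_apply,
    LinearMap.id_apply, map_sub, map_smul, weightedForm_apply, smul_eq_mul]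

end WeightedForm

theorem duval_reiner_identity_general {X : Type*} [Fintype X] [DecidableEq X]
    (ω : X → ℝ)
    (T : (X → ℝ) →ₗ[ℝ] (X → ℝ))
    (hT : ∀ f g : X → ℝ, ∑ x, T f x * g x * ω x = ∑ x, f x * T g x * ω x)
    (f : X → ℝ) (k : ℕ) (Q : Fin k → Finset X)
    (hQdisj : Pairwise (Function.onFun Disjoint Q))
    (hQcover : Finset.univ.biUnion Q = Finset.univ)
    (fi : Fin k → X → ℝ) (hfi : ∀ i x, fi i x = if x ∈ Q i then f x else 0)
    (c : Fin k → ℝ) (ζ : ℝ) (g : X → ℝ) (hg : ∀ x, g x = ∑ i, c i * fi i x) :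
    ∑ x, T g x * g x * ω x - ζ * ∑ x, g x ^ 2 * ω x
      = ∑ i, (c i) ^ 2 * (∑ x, (T f x - ζ * f x) * fi i x * ω x)
        - (1 / 2) * ∑ i, ∑ j, (c i - c j) ^ 2 * (∑ x, T (fi j) x * fi i x * ω x) := by
  set B := (weightedForm ω).compLeft (T - ζ • LinearMap.id)
  have hBapply : ∀ u v, B u v = ∑ x, T u x * v x * ω x - ζ * ∑ x, u x * v x * ω x :=
    weightedForm_compLeft_sub_smul_apply ω T ζ
  have hf : ∑ j, fi j = f := funext fun x => by
    simp only [Finset.sum_apply, hfi, sum_ite_mem_of_partition hQdisj hQcover]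
  have hg' : ∑ i, c i • fi i = g := funext fun x => by
    simp only [Finset.sum_apply, Pi.smul_apply, smul_eq_mul, hg]
  have hcross : ∀ i j, (c i - c j) ^ 2 * B (fi j) (fi i)
      = (c i - c j) ^ 2 * ∑ x, T (fi j) x * fi i x * ω x := by
    intro i j
    rcases eq_or_ne i j with rfl | hij
    · simp
    have horth : ∑ x, fi j x * fi i x * ω x = 0 := sum_eq_zero fun x _ => by
      rw [hfi j x, hfi i x, ite_mem_mul_ite_mem_of_ne hQdisj f hij.symm x, zero_mul]
    rw [hBapply, horth, mul_zero, sub_zero]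
  have key := (isSymm_weightedForm_compLeft_sub_smul hT ζ).two_mul_apply_sum_smul c fi
  rw [hg', hf] at key
  have hgg : ∑ x, T g x * g x * ω x - ζ * ∑ x, g x ^ 2 * ω x = B g g := by
    rw [hBapply]; simp only [sq]
  have hfi_pairing : ∀ i, ∑ x, (T f x - ζ * f x) * fi i x * ω x = B f (fi i) := fun i => by
    rw [hBapply, mul_sum, ← sum_sub_distrib]
    exact sum_congr rfl fun x _ => by ring
  simp only [hgg, hfi_pairing, ← hcross]
  linarith

theorem duval_reiner_identity {X : Type*} [Fintype X] [DecidableEq X]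
    (ω : X → ℝ) (hω : ∀ x, 0 < ω x)
    (T : (X → ℝ) →ₗ[ℝ] (X → ℝ))
    (hT : ∀ f g : X → ℝ, ∑ x, T f x * g x * ω x = ∑ x, f x * T g x * ω x)
    (f : X → ℝ) (k : ℕ) (Q : Fin k → Finset X)
    (hQdisj : Pairwise (Function.onFun Disjoint Q))
    (hQcover : Finset.univ.biUnion Q = Finset.univ)
    (fi : Fin k → X → ℝ) (hfi : ∀ i x, fi i x = if x ∈ Q i then f x else 0)
    (c : Fin k → ℝ) (ζ : ℝ) (g : X → ℝ) (hg : ∀ x, g x = ∑ i, c i * fi i x) :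
    ∑ x, T g x * g x * ω x - ζ * ∑ x, g x ^ 2 * ω x
      = ∑ i, (c i) ^ 2 * (∑ x, (T f x - ζ * f x) * fi i x * ω x)
        - (1 / 2) * ∑ i, ∑ j, (c i - c j) ^ 2 * (∑ x, T (fi j) x * fi i x * ω x) :=
  duval_reiner_identity_general ω T hT f k Q hQdisj hQcover fi hfi c ζ g hg
end

section
/- Cheeger-type lower bound from excessive functions: suppose f_1, …, f_n are functions on V and Q_1, …, Q_n are pairwise disjoint subsets of V such that for each i: f_i restricted to Q_i is nonzero and nonnegative, and ⟨Δ g_i, g_i⟩_π / ‖g_i‖²_{2,π} ≤ ζ_i where g_i := f_i·χ_{Q_i}. Then 2·(1/n)∑_{i=1}^n ζ_i ≥ ι_n², where ι_n is the n-th isoperimetric constant. -/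
open Finset

/-- The symmetric Laplacian `Δ = id − (K + K*)/2` acting on `π`-weighted functions. -/
noncomputable def DeltaOp {V : Type*} [Fintype V]
    (K : V → V → ℝ) (π : V → ℝ) (f : V → ℝ) : V → ℝ :=
  fun u => f u - (∑ v, (K u v + K v u * π v / π u) * f v) / 2


set_option linter.unusedSectionVars false
set_option linter.unusedVariables false

lemma exists_levelset {V : Type*} [Fintype V] [DecidableEq V]
    (K : V → V → ℝ) (π : V → ℝ) (hK0 : ∀ u v, 0 ≤ K u v) (hπ : ∀ u, 0 < π u) :
    ∀ N : ℕ, ∀ h : V → ℝ, (univ.filter fun u => 0 < h u).card ≤ N →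
      (∀ u, 0 ≤ h u) → h ≠ 0 →
      ∃ S : Finset V, S.Nonempty ∧ (∀ u ∈ S, 0 < h u) ∧
        dpart K π S * (∑ u, h u * π u) ≤
          (∑ u, ∑ v, K u v * π u * max (h u - h v) 0) * pim π S := by
  intro N
  induction N with
  | zero =>
    intro h hcard h0 hne
    exfalso
    obtain ⟨u, hu⟩ := Function.ne_iff.mp hne
    have hmem : u ∈ univ.filter fun u => 0 < h u := by
      simp [lt_of_le_of_ne (h0 u) (Ne.symm hu)]
    have := Finset.card_pos.mpr ⟨u, hmem⟩
    omega
  | succ N ih =>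
    intro h hcard h0 hne
    set S₀ := univ.filter fun u => 0 < h u with hS₀def
    have hmem : ∀ u, u ∈ S₀ ↔ 0 < h u := fun u => by simp [hS₀def]
    have hS₀ne : S₀.Nonempty := by
      obtain ⟨u, hu⟩ := Function.ne_iff.mp hne
      exact ⟨u, (hmem u).mpr (lt_of_le_of_ne (h0 u) (Ne.symm hu))⟩
    set t := S₀.inf' hS₀ne h with htdef
    have ht_le : ∀ u ∈ S₀, t ≤ h u := fun u hu => Finset.inf'_le h hu
    have ht_pos : 0 < t := by
      rw [htdef, Finset.lt_inf'_iff]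
      intro u hu; exact (hmem u).mp hu
    have hzero : ∀ u, u ∉ S₀ → h u = 0 := fun u hu =>
      le_antisymm (not_lt.mp fun hlt => hu ((hmem u).mpr hlt)) (h0 u)
    set h' : V → ℝ := fun u => if 0 < h u then h u - t else 0 with h'def
    have h'val : ∀ u, u ∈ S₀ → h' u = h u - t := by
      intro u hu; simp [h'def, (hmem u).mp hu]
    have h'val0 : ∀ u, u ∉ S₀ → h' u = 0 := by
      intro u hu
      have := hzero u hu
      simp [h'def, this]
    have h'0 : ∀ u, 0 ≤ h' u := by
      intro u
      by_cases hu : u ∈ S₀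
      · rw [h'val u hu]; linarith [ht_le u hu]
      · rw [h'val0 u hu]
    -- pointwise key identity
    have key : ∀ u v, max (h u - h v) 0 =
        max (h' u - h' v) 0 + (if u ∈ S₀ ∧ v ∉ S₀ then t else 0) := by
      intro u v
      by_cases hu : u ∈ S₀ <;> by_cases hv : v ∈ S₀
      · rw [h'val u hu, h'val v hv]
        have : h u - t - (h v - t) = h u - h v := by ring
        rw [this]
        simp [hu, hv]
      · have hu' := (hmem u).mp hu
        have hv0 : h v = 0 := hzero v hv
        have htu := ht_le u hu
        rw [h'val u hu, h'val0 v hv, hv0]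
        rw [max_eq_left (by linarith), max_eq_left (by linarith)]
        simp [hu, hv]
      · have hu0 : h u = 0 := hzero u hu
        have hv' := (hmem v).mp hv
        have h'v : 0 ≤ h' v := h'0 v
        rw [h'val0 u hu, hu0]
        rw [max_eq_right (by linarith), max_eq_right (by linarith)]
        simp [hu]
      · have hu0 : h u = 0 := hzero u hu
        have hv0 : h v = 0 := hzero v hv
        rw [h'val0 u hu, h'val0 v hv, hu0, hv0]
        simp [hu]
    -- mass identity
    have mass : (∑ u, h u * π u) = (∑ u, h' u * π u) + t * pim π S₀ := by
      have step : ∀ u ∈ (univ : Finset V), h u * π u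
          = h' u * π u + (if u ∈ S₀ then t * π u else 0) := by
        intro u _
        by_cases hu : u ∈ S₀
        · rw [h'val u hu]; simp [hu]; ring
        · rw [h'val0 u hu, hzero u hu]; simp [hu]
      rw [Finset.sum_congr rfl step, Finset.sum_add_distrib,
        Finset.sum_ite_mem, Finset.univ_inter, pim, Finset.mul_sum]
    -- edge identity
    have edge : (∑ u, ∑ v, K u v * π u * max (h u - h v) 0)
        = (∑ u, ∑ v, K u v * π u * max (h' u - h' v) 0) + t * dpart K π S₀ := by
      have step : ∀ u ∈ (univ : Finset V), ∀ v ∈ (univ : Finset V),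
          K u v * π u * max (h u - h v) 0
          = K u v * π u * max (h' u - h' v) 0
            + (if u ∈ S₀ then (if v ∈ S₀ᶜ then K u v * π u * t else 0) else 0) := by
        intro u _ v _
        rw [key u v]
        by_cases hu : u ∈ S₀ <;> by_cases hv : v ∈ S₀ <;>
          simp [hu, hv, Finset.mem_compl] <;> ring
      calc (∑ u, ∑ v, K u v * π u * max (h u - h v) 0)
          = ∑ u, ∑ v, (K u v * π u * max (h' u - h' v) 0
            + (if u ∈ S₀ then (if v ∈ S₀ᶜ then K u v * π u * t else 0) else 0)) := by
            refine Finset.sum_congr rfl fun u hu => Finset.sum_congr rfl fun v hv => ?_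
            exact step u hu v hv
        _ = (∑ u, ∑ v, K u v * π u * max (h' u - h' v) 0)
            + ∑ u, ∑ v, (if u ∈ S₀ then (if v ∈ S₀ᶜ then K u v * π u * t else 0) else 0) := by
            rw [← Finset.sum_add_distrib]
            refine Finset.sum_congr rfl fun u _ => ?_
            rw [← Finset.sum_add_distrib]
        _ = (∑ u, ∑ v, K u v * π u * max (h' u - h' v) 0) + t * dpart K π S₀ := by
            congr 1
            have inner : ∀ u, (∑ v, (if u ∈ S₀ then (if v ∈ S₀ᶜ then K u v * π u * t else 0) else 0))
                = (if u ∈ S₀ then ∑ v ∈ S₀ᶜ, K u v * π u * t else 0) := by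
              intro u
              by_cases hu : u ∈ S₀
              · simp only [hu, if_true]
                rw [Finset.sum_ite_mem, Finset.univ_inter]
              · simp [hu]
            rw [Finset.sum_congr rfl fun u _ => inner u, Finset.sum_ite_mem, Finset.univ_inter,
              dpart, Finset.mul_sum]
            refine Finset.sum_congr rfl fun u _ => ?_
            rw [Finset.mul_sum]
            refine Finset.sum_congr rfl fun v _ => ?_
            ring
    -- strict subset
    have hsub : (univ.filter fun u => 0 < h' u) ⊂ S₀ := by
      constructor
      · intro u hu
        rw [Finset.mem_filter] at hu
        by_contra hc
        rw [h'val0 u hc] at hu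
        exact lt_irrefl 0 hu.2
      · intro hcon
        obtain ⟨u, huS, hut⟩ := Finset.exists_mem_eq_inf' hS₀ne h
        have := hcon huS
        rw [Finset.mem_filter] at this
        rw [h'val u huS, ← hut] at this
        linarith [this.2]
    have hcard' : (univ.filter fun u => 0 < h' u).card ≤ N := by
      have := Finset.card_lt_card hsub
      omega
    by_cases hc : ∀ u, h' u = 0
    · -- take S₀
      refine ⟨S₀, hS₀ne, fun u hu => (hmem u).mp hu, ?_⟩
      have e1 : (∑ u, h' u * π u) = 0 := by simp [hc]
      have e2 : (∑ u, ∑ v, K u v * π u * max (h' u - h' v) 0) = 0 := by simp [hc]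
      rw [mass, edge, e1, e2, zero_add, zero_add]
      apply le_of_eq
      ring
    · push_neg at hc
      obtain ⟨w, hw⟩ := hc
      have hne' : h' ≠ 0 := fun hcon => hw (by rw [hcon]; rfl)
      obtain ⟨S, hS1, hS2, hS3⟩ := ih h' hcard' h'0 hne'
      have hSpos : ∀ u ∈ S, 0 < h u := by
        intro u hu
        have := hS2 u hu
        by_cases hus : u ∈ S₀
        · exact (hmem u).mp hus
        · rw [h'val0 u hus] at this; linarith
      set A := dpart K π S with hA
      set B := pim π S with hB
      set A₀ := dpart K π S₀ with hA₀
      set B₀ := pim π S₀ with hB₀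
      set E := (∑ u, ∑ v, K u v * π u * max (h' u - h' v) 0) with hE
      set Nm := (∑ u, h' u * π u) with hNm
      have hBpos : 0 < B := Finset.sum_pos (fun u _ => hπ u) hS1
      have hB₀pos : 0 < B₀ := Finset.sum_pos (fun u _ => hπ u) hS₀ne
      have hNmpos : 0 < Nm := by
        refine Finset.sum_pos' (fun u _ => mul_nonneg (h'0 u) (hπ u).le) ?_
        exact ⟨w, Finset.mem_univ w, mul_pos (lt_of_le_of_ne (h'0 w) (Ne.symm hw)) (hπ w)⟩
      have hA₀nn : 0 ≤ A₀ :=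
        Finset.sum_nonneg fun u _ => Finset.sum_nonneg fun v _ =>
          mul_nonneg (hK0 u v) (hπ u).le
      by_cases hcase : A * (Nm + t * B₀) ≤ (E + t * A₀) * B
      · exact ⟨S, hS1, hSpos, by rw [mass, edge]; exact hcase⟩
      · push_neg at hcase
        refine ⟨S₀, hS₀ne, fun u hu => (hmem u).mp hu, ?_⟩
        rw [mass, edge]
        -- from hcase and hS3 : A * Nm ≤ E * B, derive A₀ * B < A * B₀
        have h1 : A₀ * B < A * B₀ := by nlinarith
        have h2 : A₀ * Nm * B < E * B₀ * B := by nlinarith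
        have h3 : A₀ * Nm < E * B₀ := lt_of_mul_lt_mul_right h2 hBpos.le
        nlinarith

section aux

variable {V : Type*} [Fintype V] [DecidableEq V] (K : V → V → ℝ) (π : V → ℝ)

lemma dsum_split (F G H : V → V → ℝ) :
    ∑ u, ∑ v, (F u v + G u v - H u v)
      = (∑ u, ∑ v, F u v) + (∑ u, ∑ v, G u v) - (∑ u, ∑ v, H u v) := by
  rw [← Finset.sum_add_distrib, ← Finset.sum_sub_distrib]
  exact Finset.sum_congr rfl fun u _ => by
    rw [← Finset.sum_add_distrib, ← Finset.sum_sub_distrib]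

lemma row_sum (hK1 : ∀ u, ∑ v, K u v = 1) (c : V → ℝ) :
    ∑ u, ∑ v, K u v * π u * c u = ∑ u, c u * π u := by
  refine Finset.sum_congr rfl fun u _ => ?_
  calc ∑ v, K u v * π u * c u = (∑ v, K u v) * (π u * c u) := by
        rw [Finset.sum_mul]; exact Finset.sum_congr rfl fun v _ => by ring
    _ = c u * π u := by rw [hK1]; ring

lemma col_sum (hstat : ∀ v, ∑ u, π u * K u v = π v) (c : V → ℝ) :
    ∑ u, ∑ v, K u v * π u * c v = ∑ v, c v * π v := by
  rw [Finset.sum_comm]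
  refine Finset.sum_congr rfl fun v _ => ?_
  calc ∑ u, K u v * π u * c v = (∑ u, π u * K u v) * c v := by
        rw [Finset.sum_mul]; exact Finset.sum_congr rfl fun u _ => by ring
    _ = c v * π v := by rw [hstat]; ring

lemma dirichlet_identity (hK1 : ∀ u, ∑ v, K u v = 1)
    (hπ : ∀ u, 0 < π u) (hstat : ∀ v, ∑ u, π u * K u v = π v) (g : V → ℝ) :
    ∑ u, ∑ v, K u v * π u * (g u - g v) ^ 2
      = 2 * (∑ u, g u ^ 2 * π u) - 2 * (∑ u, ∑ v, K u v * π u * (g u * g v)) := by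
  have e : ∀ u ∈ (univ : Finset V), ∀ v ∈ (univ : Finset V),
      K u v * π u * (g u - g v) ^ 2
      = K u v * π u * (g u ^ 2) + K u v * π u * (g v ^ 2)
        - (2 * (K u v * π u * (g u * g v))) := fun u _ v _ => by ring
  rw [Finset.sum_congr rfl fun u hu => Finset.sum_congr rfl fun v hv => e u hu v hv,
    dsum_split, row_sum K π hK1, col_sum K π hstat]
  have : ∑ u, ∑ v, 2 * (K u v * π u * (g u * g v))
      = 2 * ∑ u, ∑ v, K u v * π u * (g u * g v) := by
    rw [Finset.mul_sum]
    exact Finset.sum_congr rfl fun u _ => by rw [Finset.mul_sum]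
  rw [this]; ring

lemma dirichlet_identity' (hK1 : ∀ u, ∑ v, K u v = 1)
    (hπ : ∀ u, 0 < π u) (hstat : ∀ v, ∑ u, π u * K u v = π v) (g : V → ℝ) :
    ∑ u, ∑ v, K u v * π u * (g u + g v) ^ 2
      = 2 * (∑ u, g u ^ 2 * π u) + 2 * (∑ u, ∑ v, K u v * π u * (g u * g v)) := by
  have e : ∀ u ∈ (univ : Finset V), ∀ v ∈ (univ : Finset V),
      K u v * π u * (g u + g v) ^ 2
      = K u v * π u * (g u ^ 2) + K u v * π u * (g v ^ 2)
        - (-2 * (K u v * π u * (g u * g v))) := fun u _ v _ => by ring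
  rw [Finset.sum_congr rfl fun u hu => Finset.sum_congr rfl fun v hv => e u hu v hv,
    dsum_split, row_sum K π hK1, col_sum K π hstat]
  have : ∑ u, ∑ v, -2 * (K u v * π u * (g u * g v))
      = -2 * ∑ u, ∑ v, K u v * π u * (g u * g v) := by
    rw [Finset.mul_sum]
    exact Finset.sum_congr rfl fun u _ => by rw [Finset.mul_sum]
  rw [this]; ring

lemma delta_identity (hK1 : ∀ u, ∑ v, K u v = 1)
    (hπ : ∀ u, 0 < π u) (hstat : ∀ v, ∑ u, π u * K u v = π v) (g : V → ℝ) :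
    ∑ u, DeltaOp K π g u * g u * π u
      = (∑ u, g u ^ 2 * π u) - (∑ u, ∑ v, K u v * π u * (g u * g v)) := by
  have expand : ∀ u ∈ (univ : Finset V), DeltaOp K π g u * g u * π u
      = g u ^ 2 * π u - (∑ v, (K u v * π u + K v u * π v) * (g v * g u)) / 2 := by
    intro u _
    have inner : (∑ v, (K u v + K v u * π v / π u) * g v) * (g u * π u)
        = ∑ v, (K u v * π u + K v u * π v) * (g v * g u) := by
      rw [Finset.sum_mul]
      refine Finset.sum_congr rfl fun v _ => ?_
      have hne : π u ≠ 0 := (hπ u).ne'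
      field_simp
    calc DeltaOp K π g u * g u * π u
        = g u ^ 2 * π u - ((∑ v, (K u v + K v u * π v / π u) * g v) * (g u * π u)) / 2 := by
          unfold DeltaOp; ring
      _ = g u ^ 2 * π u - (∑ v, (K u v * π u + K v u * π v) * (g v * g u)) / 2 := by
          rw [inner]
  rw [Finset.sum_congr rfl expand, Finset.sum_sub_distrib]
  congr 1
  have split : ∀ u ∈ (univ : Finset V),
      (∑ v, (K u v * π u + K v u * π v) * (g v * g u)) / 2
      = ((∑ v, K u v * π u * (g u * g v)) + (∑ v, K v u * π v * (g v * g u))) / 2 := by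
    intro u _
    congr 1
    rw [← Finset.sum_add_distrib]
    exact Finset.sum_congr rfl fun v _ => by ring
  rw [Finset.sum_congr rfl split]
  have e2 : ∑ u, ∑ v, K v u * π v * (g v * g u) = ∑ u, ∑ v, K u v * π u * (g u * g v) := by
    rw [Finset.sum_comm]
  rw [← Finset.sum_div, Finset.sum_add_distrib, e2]
  ring

end aux

lemma cheeger_single {V : Type*} [Fintype V] [DecidableEq V]
    (K : V → V → ℝ) (π : V → ℝ)
    (hK0 : ∀ u v, 0 ≤ K u v) (hK1 : ∀ u, ∑ v, K u v = 1)
    (hπ : ∀ u, 0 < π u) (hstat : ∀ v, ∑ u, π u * K u v = π v)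
    (g : V → ℝ) (hg0 : ∀ u, 0 ≤ g u) (hgne : g ≠ 0) (ζ : ℝ)
    (hray : ∑ u, DeltaOp K π g u * g u * π u ≤ ζ * ∑ u, g u ^ 2 * π u) :
    0 ≤ ζ ∧ ∃ S : Finset V, S.Nonempty ∧ (∀ u ∈ S, 0 < g u) ∧
      dpart K π S ≤ Real.sqrt (2 * ζ) * pim π S := by
  set M := ∑ u, g u ^ 2 * π u with hM
  set C := ∑ u, ∑ v, K u v * π u * (g u * g v) with hC
  obtain ⟨w, hw0⟩ := Function.ne_iff.mp hgne
  have hw : g w ≠ 0 := by simpa using hw0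
  have hgw : 0 < g w := lt_of_le_of_ne (hg0 w) (Ne.symm hw)
  have hMpos : 0 < M := by
    refine Finset.sum_pos' (fun u _ => mul_nonneg (sq_nonneg _) (hπ u).le)
      ⟨w, Finset.mem_univ w, mul_pos (pow_pos hgw 2) (hπ w)⟩
  have hD : ∑ u, DeltaOp K π g u * g u * π u = M - C :=
    delta_identity K π hK1 hπ hstat g
  have hDir : ∑ u, ∑ v, K u v * π u * (g u - g v) ^ 2 = 2 * M - 2 * C :=
    dirichlet_identity K π hK1 hπ hstat g
  have hDir' : ∑ u, ∑ v, K u v * π u * (g u + g v) ^ 2 = 2 * M + 2 * C :=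
    dirichlet_identity' K π hK1 hπ hstat g
  have hDirnn : 0 ≤ 2 * M - 2 * C := by
    rw [← hDir]
    exact Finset.sum_nonneg fun u _ => Finset.sum_nonneg fun v _ =>
      mul_nonneg (mul_nonneg (hK0 u v) (hπ u).le) (sq_nonneg _)
  have hDirnn' : 0 ≤ 2 * M + 2 * C := by
    rw [← hDir']
    exact Finset.sum_nonneg fun u _ => Finset.sum_nonneg fun v _ =>
      mul_nonneg (mul_nonneg (hK0 u v) (hπ u).le) (sq_nonneg _)
  have hDleζ : M - C ≤ ζ * M := by rw [← hD]; exact hray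
  have hζ : 0 ≤ ζ := by nlinarith
  have habs : ∀ u v : V, |g u ^ 2 - g v ^ 2| = |g u - g v| * (g u + g v) := by
    intro u v
    rw [show g u ^ 2 - g v ^ 2 = (g u - g v) * (g u + g v) by ring, abs_mul,
      abs_of_nonneg (add_nonneg (hg0 u) (hg0 v))]
  -- Cauchy–Schwarz
  have hCS : (∑ u, ∑ v, K u v * π u * |g u ^ 2 - g v ^ 2|) ^ 2
      ≤ (2 * M - 2 * C) * (2 * M + 2 * C) := by
    have φnn : ∀ p : V × V, 0 ≤ K p.1 p.2 * π p.1 := fun p => mul_nonneg (hK0 _ _) (hπ _).le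
    have key := Finset.sum_mul_sq_le_sq_mul_sq (univ : Finset (V × V))
      (fun p => Real.sqrt (K p.1 p.2 * π p.1) * |g p.1 - g p.2|)
      (fun p => Real.sqrt (K p.1 p.2 * π p.1) * (g p.1 + g p.2))
    have eq1 : ∑ p : V × V, (Real.sqrt (K p.1 p.2 * π p.1) * |g p.1 - g p.2|)
        * (Real.sqrt (K p.1 p.2 * π p.1) * (g p.1 + g p.2))
        = ∑ u, ∑ v, K u v * π u * |g u ^ 2 - g v ^ 2| := by
      rw [Fintype.sum_prod_type]
      refine Finset.sum_congr rfl fun u _ => Finset.sum_congr rfl fun v _ => ?_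
      rw [habs u v,
        show (Real.sqrt (K u v * π u) * |g u - g v|) * (Real.sqrt (K u v * π u) * (g u + g v))
          = (Real.sqrt (K u v * π u) * Real.sqrt (K u v * π u)) * (|g u - g v| * (g u + g v)) by
            ring,
        Real.mul_self_sqrt (φnn (u, v))]
    have eq2 : ∑ p : V × V, (Real.sqrt (K p.1 p.2 * π p.1) * |g p.1 - g p.2|) ^ 2
        = 2 * M - 2 * C := by
      rw [Fintype.sum_prod_type, ← hDir]
      refine Finset.sum_congr rfl fun u _ => Finset.sum_congr rfl fun v _ => ?_
      rw [mul_pow, Real.sq_sqrt (φnn (u, v)), sq_abs]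
    have eq3 : ∑ p : V × V, (Real.sqrt (K p.1 p.2 * π p.1) * (g p.1 + g p.2)) ^ 2
        = 2 * M + 2 * C := by
      rw [Fintype.sum_prod_type, ← hDir']
      refine Finset.sum_congr rfl fun u _ => Finset.sum_congr rfl fun v _ => ?_
      rw [mul_pow, Real.sq_sqrt (φnn (u, v))]
    rw [eq1, eq2, eq3] at key
    exact key
  -- bound the absolute-difference sum
  have hprod : (2 * M - 2 * C) * (2 * M + 2 * C) ≤ (2 * ζ * M) * (4 * M) :=
    calc (2 * M - 2 * C) * (2 * M + 2 * C)
        ≤ (2 * ζ * M) * (2 * M + 2 * C) :=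
          mul_le_mul_of_nonneg_right (by linarith) hDirnn'
      _ ≤ (2 * ζ * M) * (4 * M) := by
          refine mul_le_mul_of_nonneg_left (by linarith) ?_
          nlinarith
  have hEnn : 0 ≤ ∑ u, ∑ v, K u v * π u * |g u ^ 2 - g v ^ 2| :=
    Finset.sum_nonneg fun u _ => Finset.sum_nonneg fun v _ =>
      mul_nonneg (mul_nonneg (hK0 u v) (hπ u).le) (abs_nonneg _)
  have hsq : (2 * Real.sqrt (2 * ζ) * M) ^ 2 = (2 * ζ * M) * (4 * M) := by
    rw [mul_pow, mul_pow, Real.sq_sqrt (by linarith : (0:ℝ) ≤ 2 * ζ)]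
    ring
  have hEbound : (∑ u, ∑ v, K u v * π u * |g u ^ 2 - g v ^ 2|)
      ≤ 2 * Real.sqrt (2 * ζ) * M := by
    have h1 : (∑ u, ∑ v, K u v * π u * |g u ^ 2 - g v ^ 2|) ^ 2
        ≤ (2 * Real.sqrt (2 * ζ) * M) ^ 2 := by rw [hsq]; exact le_trans hCS hprod
    have h2 : 0 ≤ 2 * Real.sqrt (2 * ζ) * M := by positivity
    nlinarith
  -- zero-sum by stationarity
  have hzsum : ∑ u, ∑ v, K u v * π u * (g u ^ 2 - g v ^ 2) = 0 := by
    have e : ∀ u ∈ (univ : Finset V), ∀ v ∈ (univ : Finset V),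
        K u v * π u * (g u ^ 2 - g v ^ 2)
        = K u v * π u * (g u ^ 2) - K u v * π u * (g v ^ 2) := fun u _ v _ => by ring
    rw [Finset.sum_congr rfl fun u hu => Finset.sum_congr rfl fun v hv => e u hu v hv]
    rw [Finset.sum_congr rfl fun u (_ : u ∈ univ) => Finset.sum_sub_distrib _ _,
      Finset.sum_sub_distrib, row_sum K π hK1, col_sum K π hstat, sub_self]
  -- positive part vs absolute value
  have hEplus : 2 * (∑ u, ∑ v, K u v * π u * max (g u ^ 2 - g v ^ 2) 0)
      = ∑ u, ∑ v, K u v * π u * |g u ^ 2 - g v ^ 2| := by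
    have e : ∀ u ∈ (univ : Finset V), ∀ v ∈ (univ : Finset V),
        K u v * π u * |g u ^ 2 - g v ^ 2|
        = 2 * (K u v * π u * max (g u ^ 2 - g v ^ 2) 0)
          - K u v * π u * (g u ^ 2 - g v ^ 2) := by
      intro u _ v _
      have : |g u ^ 2 - g v ^ 2| = 2 * max (g u ^ 2 - g v ^ 2) 0 - (g u ^ 2 - g v ^ 2) := by
        rcases le_or_gt 0 (g u ^ 2 - g v ^ 2) with hx | hx
        · rw [abs_of_nonneg hx, max_eq_left hx]; ring
        · rw [abs_of_neg hx, max_eq_right hx.le]; ring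
      rw [this]; ring
    rw [Finset.sum_congr rfl fun u hu => Finset.sum_congr rfl fun v hv => e u hu v hv,
      Finset.sum_congr rfl fun u (_ : u ∈ univ) => Finset.sum_sub_distrib _ _,
      Finset.sum_sub_distrib, hzsum, sub_zero, Finset.mul_sum]
    exact Finset.sum_congr rfl fun u _ => Finset.mul_sum _ _ _
  have hEplus_bound : (∑ u, ∑ v, K u v * π u * max (g u ^ 2 - g v ^ 2) 0)
      ≤ Real.sqrt (2 * ζ) * M := by
    nlinarith [hEplus, hEbound]
  -- apply the level-set lemma to h = g²
  have hhne : (fun u => g u ^ 2) ≠ 0 :=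
    Function.ne_iff.mpr ⟨w, by simpa using pow_ne_zero 2 hw⟩
  obtain ⟨S, hS1, hS2, hS3⟩ := exists_levelset K π hK0 hπ
    ((univ.filter fun u => 0 < (fun u => g u ^ 2) u).card) (fun u => g u ^ 2) le_rfl
    (fun u => sq_nonneg _) hhne
  have hSpos : ∀ u ∈ S, 0 < g u := by
    intro u hu
    rcases (hg0 u).lt_or_eq with h | h
    · exact h
    · exfalso
      have := hS2 u hu
      rw [← h] at this
      simp at this
  have hpim : 0 < pim π S := Finset.sum_pos (fun u _ => hπ u) hS1
  refine ⟨hζ, S, hS1, hSpos, ?_⟩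
  have step : dpart K π S * M ≤ (Real.sqrt (2 * ζ) * pim π S) * M := by
    calc dpart K π S * M ≤ (∑ u, ∑ v, K u v * π u * max (g u ^ 2 - g v ^ 2) 0) * pim π S :=
          hS3
      _ ≤ (Real.sqrt (2 * ζ) * M) * pim π S :=
          mul_le_mul_of_nonneg_right hEplus_bound hpim.le
      _ = (Real.sqrt (2 * ζ) * pim π S) * M := by ring
  exact le_of_mul_le_mul_right step hMpos

theorem generalized_cheeger_lower_bound {V : Type*} [Fintype V] [DecidableEq V]
    (K : V → V → ℝ) (π : V → ℝ)
    (hK0 : ∀ u v, 0 ≤ K u v) (hK1 : ∀ u, ∑ v, K u v = 1)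
    (hπ : ∀ u, 0 < π u) (hπ1 : ∑ u, π u = 1)
    (hstat : ∀ v, ∑ u, π u * K u v = π v)
    (n : ℕ) (hn : 0 < n) (hcard : n ≤ Fintype.card V)
    (ζ : Fin n → ℝ) (f : Fin n → V → ℝ) (Q : Fin n → Finset V)
    (hQdisj : Pairwise (Function.onFun Disjoint Q))
    (g : Fin n → V → ℝ) (hg : ∀ i u, g i u = if u ∈ Q i then f i u else 0)
    (hgne : ∀ i, g i ≠ 0) (hgpos : ∀ i u, 0 ≤ g i u)
    (hray : ∀ i, ∑ u, DeltaOp K π (g i) u * g i u * π u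
      ≤ ζ i * ∑ u, (g i u) ^ 2 * π u) :
    2 * ((∑ i, ζ i) / n) ≥ (iotaD K π n) ^ 2 := by
  have key : ∀ i, 0 ≤ ζ i ∧ ∃ S : Finset V, S.Nonempty ∧ (∀ u ∈ S, 0 < g i u) ∧
      dpart K π S ≤ Real.sqrt (2 * ζ i) * pim π S :=
    fun i => cheeger_single K π hK0 hK1 hπ hstat (g i) (hgpos i) (hgne i) (ζ i) (hray i)
  have hζ0 : ∀ i, 0 ≤ ζ i := fun i => (key i).1
  choose S hS1 hS2 hS3 using fun i => (key i).2
  have hsub : ∀ i, S i ⊆ Q i := by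
    intro i u hu
    have hpos := hS2 i u hu
    by_contra hc
    rw [hg i u, if_neg hc] at hpos
    exact lt_irrefl 0 hpos
  have hSdisj : Pairwise (Function.onFun Disjoint S) :=
    fun i j hij => (hQdisj hij).mono (hsub i) (hsub j)
  have hnpos : (0:ℝ) < n := Nat.cast_pos.mpr hn
  set X := {x : ℝ | ∃ P : Fin n → Finset V, (∀ i, (P i).Nonempty) ∧
    Pairwise (Function.onFun Disjoint P) ∧
    x = (∑ i, dpart K π (P i) / pim π (P i)) / n} with hX
  have hset_nonneg : ∀ x ∈ X, (0:ℝ) ≤ x := by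
    rintro x ⟨P, hP1, -, rfl⟩
    apply div_nonneg _ (Nat.cast_nonneg n)
    refine Finset.sum_nonneg fun i _ => div_nonneg ?_ ?_
    · exact Finset.sum_nonneg fun u _ => Finset.sum_nonneg fun v _ =>
        mul_nonneg (hK0 u v) (hπ u).le
    · exact (Finset.sum_pos (fun u _ => hπ u) (hP1 i)).le
  have hbdd : BddBelow X := ⟨0, hset_nonneg⟩
  have hmemset : (∑ i, dpart K π (S i) / pim π (S i)) / n ∈ X := ⟨S, hS1, hSdisj, rfl⟩
  have hiota_eq : iotaD K π n = sInf X := rfl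
  have hle : iotaD K π n ≤ (∑ i, dpart K π (S i) / pim π (S i)) / n := by
    rw [hiota_eq]; exact csInf_le hbdd hmemset
  have h0 : 0 ≤ iotaD K π n := by rw [hiota_eq]; exact Real.sInf_nonneg hset_nonneg
  have hterm : ∀ i, dpart K π (S i) / pim π (S i) ≤ Real.sqrt (2 * ζ i) := by
    intro i
    have hp : 0 < pim π (S i) := Finset.sum_pos (fun u _ => hπ u) (hS1 i)
    rw [div_le_iff₀ hp]
    exact hS3 i
  have hR : iotaD K π n ≤ (∑ i, Real.sqrt (2 * ζ i)) / n := by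
    refine hle.trans ?_
    exact (div_le_div_iff_of_pos_right hnpos).mpr (Finset.sum_le_sum fun i _ => hterm i)
  have hsq : (iotaD K π n) ^ 2 ≤ ((∑ i, Real.sqrt (2 * ζ i)) / n) ^ 2 :=
    pow_le_pow_left₀ h0 hR 2
  have hcs : (∑ i, Real.sqrt (2 * ζ i)) ^ 2 ≤ n * ∑ i, 2 * ζ i := by
    have e : ∑ i : Fin n, Real.sqrt (2 * ζ i) ^ 2 = ∑ i, 2 * ζ i :=
      Finset.sum_congr rfl fun i _ => Real.sq_sqrt (by linarith [hζ0 i])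
    calc (∑ i, Real.sqrt (2 * ζ i)) ^ 2
        = (∑ i, 1 * Real.sqrt (2 * ζ i)) ^ 2 := by simp
      _ ≤ (∑ _i : Fin n, (1:ℝ) ^ 2) * ∑ i, Real.sqrt (2 * ζ i) ^ 2 :=
          Finset.sum_mul_sq_le_sq_mul_sq _ _ _
      _ = n * ∑ i, 2 * ζ i := by rw [e]; simp
  rw [ge_iff_le]
  calc (iotaD K π n) ^ 2 ≤ ((∑ i, Real.sqrt (2 * ζ i)) / n) ^ 2 := hsq
    _ = (∑ i, Real.sqrt (2 * ζ i)) ^ 2 / (n:ℝ) ^ 2 := div_pow _ _ _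
    _ ≤ (n * ∑ i, 2 * ζ i) / (n:ℝ) ^ 2 := by
        apply div_le_div_of_nonneg_right hcs
        positivity
    _ = 2 * ((∑ i, ζ i) / n) := by
        rw [show ∑ i, 2 * ζ i = 2 * ∑ i, ζ i from (Finset.mul_sum _ _ _).symm]
        field_simp
end
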